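/- (Lemma 2.6(1)) Let μ ≥ 0 and assume inf_{u ∈ S(b)} I_{μ,T}(u) < 0 for every b ∈ (0,a]. Then the function b ↦ m_μ(b) is continuous on (0,a], where m_μ(b) = inf { I_μ(u) : u ∈ S(b), [u] < R_0 }. -/

import Mathlib

open MeasureTheory Filter Set Topology
open scoped ENNReal

noncomputable section

abbrev EN (N : ℕ) := EuclideanSpace ℝ (Fin N)

/-- squared Gagliardo seminorm `[u]²` (as an extended nonnegative real). -/
def gagSq (N : ℕ) (s : ℝ) (u : EN N → ℝ) : ℝ≥0∞ :=
  ∫⁻ x, ∫⁻ y, ENNReal.ofReal ((u x - u y) ^ 2 / ‖x - y‖ ^ ((N : ℝ) + 2 * s))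

/-- squared Gagliardo seminorm `[u]²` as a real number. -/
def gagSqR (N : ℕ) (s : ℝ) (u : EN N → ℝ) : ℝ := (gagSq N s u).toReal

/-- the Gagliardo seminorm `[u]`. -/
def gagNorm (N : ℕ) (s : ℝ) (u : EN N → ℝ) : ℝ := Real.sqrt (gagSqR N s u)

/-- `‖u‖₂²`. -/
def l2sq (N : ℕ) (u : EN N → ℝ) : ℝ := ∫ x, (u x) ^ 2

/-- membership in the fractional Sobolev space `ℋ = H^s`. -/
def memH (N : ℕ) (s : ℝ) (u : EN N → ℝ) : Prop :=
  MemLp u 2 (volume : Measure (EN N)) ∧ gagSq N s u < ⊤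

/-- the sphere `S(c) = {u ∈ ℋ : ‖u‖₂² = c}`. -/
def msphere (N : ℕ) (s c : ℝ) : Set (EN N → ℝ) := {u | memH N s u ∧ l2sq N u = c}

/-- the nonlocal term `∫∫ |u(x)|^t |u(y)|^t / |x-y|^{N-α}`; `Q = nlterm N α q`, `P = nlterm N α p`. -/
def nlterm (N : ℕ) (α t : ℝ) (u : EN N → ℝ) : ℝ :=
  (∫⁻ x, ∫⁻ y, ENNReal.ofReal (|u x| ^ t * |u y| ^ t / ‖x - y‖ ^ ((N : ℝ) - α))).toReal

/-- `‖u‖_ℋ² = [u]² + ‖u‖₂²`. -/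
def hNormSq (N : ℕ) (s : ℝ) (u : EN N → ℝ) : ℝ := gagSqR N s u + l2sq N u

/-- `γ_t = (Nt − N − α)/(2ts)`. -/
def gam (N : ℕ) (s α t : ℝ) : ℝ := ((N : ℝ) * t - N - α) / (2 * t * s)

/-- the functional `I_μ`. -/
def Ifun (N : ℕ) (s α q p μ : ℝ) (u : EN N → ℝ) : ℝ :=
  gagSqR N s u / 2 + μ / 2 * l2sq N u - nlterm N α q u / (2 * q) - nlterm N α p u / (2 * p)

/-- the truncated functional `I_{μ,T}`. -/
def ITfun (N : ℕ) (s α q p μ : ℝ) (τ : ℝ → ℝ) (u : EN N → ℝ) : ℝ :=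
  gagSqR N s u / 2 + μ / 2 * l2sq N u - nlterm N α q u / (2 * q)
    - τ (gagNorm N s u) * nlterm N α p u / (2 * p)

/-- the functional `J_ε`. -/
def Jfun (N : ℕ) (s α q p : ℝ) (V : EN N → ℝ) (ε : ℝ) (u : EN N → ℝ) : ℝ :=
  gagSqR N s u / 2 + (∫ x, V (ε • x) * (u x) ^ 2) / 2 - nlterm N α q u / (2 * q)
    - nlterm N α p u / (2 * p)

/-- the truncated functional `J_{ε,T}`. -/
def JTfun (N : ℕ) (s α q p : ℝ) (V : EN N → ℝ) (ε : ℝ) (τ : ℝ → ℝ) (u : EN N → ℝ) : ℝ :=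
  gagSqR N s u / 2 + (∫ x, V (ε • x) * (u x) ^ 2) / 2 - nlterm N α q u / (2 * q)
    - τ (gagNorm N s u) * nlterm N α p u / (2 * p)

/-- the inner product of `ℋ`. -/
def Hinner (N : ℕ) (s : ℝ) (u v : EN N → ℝ) : ℝ :=
  (∫ x, ∫ y, (u x - u y) * (v x - v y) / ‖x - y‖ ^ ((N : ℝ) + 2 * s)) + ∫ x, u x * v x


lemma gagSq_smul (N : ℕ) (s c : ℝ) (u : EN N → ℝ) :
    gagSq N s (c • u) = ENNReal.ofReal (c ^ 2) * gagSq N s u := by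
  unfold gagSq
  rw [← MeasureTheory.lintegral_const_mul' _ _ ENNReal.ofReal_ne_top]
  refine lintegral_congr fun x => ?_
  rw [← MeasureTheory.lintegral_const_mul' _ _ ENNReal.ofReal_ne_top]
  refine lintegral_congr fun y => ?_
  rw [← ENNReal.ofReal_mul (sq_nonneg c)]
  congr 1
  simp only [Pi.smul_apply, smul_eq_mul]
  rw [← mul_div_assoc]
  congr 1
  ring

lemma gagSqR_smul (N : ℕ) (s c : ℝ) (u : EN N → ℝ) :
    gagSqR N s (c • u) = c ^ 2 * gagSqR N s u := by
  unfold gagSqR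
  rw [gagSq_smul, ENNReal.toReal_mul, ENNReal.toReal_ofReal (sq_nonneg c)]

lemma gagNorm_smul (N : ℕ) (s : ℝ) {c : ℝ} (hc : 0 ≤ c) (u : EN N → ℝ) :
    gagNorm N s (c • u) = c * gagNorm N s u := by
  unfold gagNorm
  rw [gagSqR_smul, Real.sqrt_mul (sq_nonneg c), Real.sqrt_sq hc]

lemma l2sq_smul (N : ℕ) (c : ℝ) (u : EN N → ℝ) :
    l2sq N (c • u) = c ^ 2 * l2sq N u := by
  unfold l2sq
  have := MeasureTheory.integral_smul (μ := (volume : Measure (EN N))) (c ^ 2) (fun x => u x ^ 2)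
  simp only [smul_eq_mul] at this
  rw [← this]
  refine integral_congr_ae (Filter.Eventually.of_forall fun x => ?_)
  simp [mul_pow]

lemma nlterm_smul (N : ℕ) (α t : ℝ) {c : ℝ} (hc : 0 < c) (u : EN N → ℝ) :
    nlterm N α t (c • u) = c ^ (2 * t) * nlterm N α t u := by
  unfold nlterm
  rw [← ENNReal.toReal_ofReal (le_of_lt (Real.rpow_pos_of_pos hc (2*t))), ← ENNReal.toReal_mul]
  congr 1
  rw [← MeasureTheory.lintegral_const_mul' _ _ ENNReal.ofReal_ne_top]
  refine lintegral_congr fun x => ?_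
  rw [← MeasureTheory.lintegral_const_mul' _ _ ENNReal.ofReal_ne_top]
  refine lintegral_congr fun y => ?_
  rw [← ENNReal.ofReal_mul (le_of_lt (Real.rpow_pos_of_pos hc (2*t)))]
  congr 1
  simp only [Pi.smul_apply, smul_eq_mul, abs_mul, abs_of_pos hc]
  rw [Real.mul_rpow hc.le (abs_nonneg _), Real.mul_rpow hc.le (abs_nonneg _)]
  rw [← mul_div_assoc]
  congr 1
  rw [show (2:ℝ) * t = t + t by ring, Real.rpow_add hc]
  ring

lemma memH_smul (N : ℕ) (s c : ℝ) {u : EN N → ℝ} (h : memH N s u) : memH N s (c • u) := by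
  refine ⟨h.1.const_smul c, ?_⟩
  rw [gagSq_smul]
  exact ENNReal.mul_lt_top ENNReal.ofReal_lt_top h.2

lemma expConv (e : ℝ) : ConvexOn ℝ Set.univ (fun t : ℝ => Real.exp (e * t)) := by
  refine ⟨convex_univ, fun x _ y _ ca cb hca hcb hab => ?_⟩
  have h := convexOn_exp.2 (Set.mem_univ (e * x)) (Set.mem_univ (e * y)) hca hcb hab
  simp only [smul_eq_mul] at h ⊢
  calc Real.exp (e * (ca * x + cb * y)) = Real.exp (ca * (e * x) + cb * (e * y)) := by ring_nf
    _ ≤ ca * Real.exp (e * x) + cb * Real.exp (e * y) := h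

lemma w_nonneg_aux {A B e1 e2 R0 R1 : ℝ} (hA : 0 < A) (hB : 0 < B)
    (hR0 : 0 < R0) (hR01 : R0 < R1)
    (h0 : A * R0 ^ e1 + B * R0 ^ e2 = 1) (h1 : A * R1 ^ e1 + B * R1 ^ e2 = 1)
    {r : ℝ} (hr : r ∈ Icc R0 R1) : A * r ^ e1 + B * r ^ e2 ≤ 1 := by
  have hrpos : 0 < r := lt_of_lt_of_le hR0 hr.1
  have hR1 : 0 < R1 := hR0.trans hR01
  set f : ℝ → ℝ := fun t => A * Real.exp (e1 * t) + B * Real.exp (e2 * t) with hf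
  have hconv : ConvexOn ℝ Set.univ f :=
    ((expConv e1).smul hA.le).add ((expConv e2).smul hB.le)
  have hlog : Real.log r ∈ segment ℝ (Real.log R0) (Real.log R1) := by
    rw [segment_eq_Icc (Real.log_le_log hR0 (hr.1.trans hr.2))]
    exact ⟨Real.log_le_log hR0 hr.1, Real.log_le_log hrpos hr.2⟩
  have key := hconv.le_on_segment (Set.mem_univ _) (Set.mem_univ _) hlog
  have hfval : ∀ x : ℝ, 0 < x → f (Real.log x) = A * x ^ e1 + B * x ^ e2 := by
    intro x hx
    simp only [hf]
    rw [Real.rpow_def_of_pos hx e1, Real.rpow_def_of_pos hx e2, mul_comm (Real.log x)]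
    ring_nf
  rw [hfval r hrpos, hfval R0 hR0, hfval R1 hR1, h0, h1, max_self] at key
  exact key
set_option maxHeartbeats 2000000 in
/-- Lemma 2.6(1): continuity of `b ↦ m_μ(b)` on `(0,a]`. -/
theorem stmt11
    (N : ℕ) (s α q p a Cq Cp : ℝ)
    (hs0 : 0 < s) (hs1 : s < 1) (hN : 2 * s < (N : ℝ))
    (hα0 : 0 < α) (hαN : α < (N : ℝ))
    (hq1 : ((N : ℝ) + α) / N < q) (hq2 : q < ((N : ℝ) + 2 * s + α) / N)
    (hp1 : ((N : ℝ) + 2 * s + α) / N < p) (hp2 : p ≤ ((N : ℝ) + α) / ((N : ℝ) - 2 * s))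
    (ha : 0 < a) (hCq : 0 < Cq) (hCp : 0 < Cp)
    (hGNq : ∀ u, memH N s u → nlterm N α q u ≤
      Cq * gagNorm N s u ^ (2 * q * gam N s α q) *
        Real.sqrt (l2sq N u) ^ (2 * q * (1 - gam N s α q)))
    (hGNp : ∀ u, memH N s u → nlterm N α p u ≤
      Cp * gagNorm N s u ^ (2 * p * gam N s α p) *
        Real.sqrt (l2sq N u) ^ (2 * p * (1 - gam N s α p)))
    (K E : ℝ)
    (hK : K = (p * gam N s α p - q * gam N s α q) / (1 - q * gam N s α q) *
      ((1 - q * gam N s α q) / (p * gam N s α p - 1)) ^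
        ((p * gam N s α p - 1) / (p * gam N s α p - q * gam N s α q)) *
      (Cq / q) ^ ((p * gam N s α p - 1) / (p * gam N s α p - q * gam N s α q)) *
      (Cp / p) ^ ((1 - q * gam N s α q) / (p * gam N s α p - q * gam N s α q)))
    (hE : E = (q * (1 - gam N s α q) * (p * gam N s α p - 1) +
      p * (1 - gam N s α p) * (1 - q * gam N s α q)) / (p * gam N s α p - q * gam N s α q))
    (h14 : K * a ^ E < 1)
    (w : ℝ → ℝ)
    (hw : ∀ r : ℝ, w r = 1 - Cq / q * a ^ (q * (1 - gam N s α q)) * r ^ (2 * q * gam N s α q - 2)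
      - Cp / p * a ^ (p * (1 - gam N s α p)) * r ^ (2 * p * gam N s α p - 2))
    (R0 R1 : ℝ) (hR0 : 0 < R0) (hR01 : R0 < R1) (hwR0 : w R0 = 0) (hwR1 : w R1 = 0)
    (τ : ℝ → ℝ) (hτsm : ContDiff ℝ (⊤ : ℕ∞) τ) (hτanti : AntitoneOn τ (Ici 0))
    (hτ01 : ∀ r : ℝ, 0 ≤ r → τ r ∈ Icc (0 : ℝ) 1)
    (hτone : ∀ r ∈ Icc (0 : ℝ) R0, τ r = 1) (hτzero : ∀ r : ℝ, R1 ≤ r → τ r = 0)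
    (μ : ℝ) (hμ : 0 ≤ μ)
    (hneg : ∀ b ∈ Ioc (0 : ℝ) a, sInf (ITfun N s α q p μ τ '' msphere N s b) < 0)
    (m : ℝ → ℝ)
    (hm : ∀ b : ℝ, m b = sInf (Ifun N s α q p μ '' {u | u ∈ msphere N s b ∧ gagNorm N s u < R0})) :
    ContinuousOn m (Ioc 0 a) := by
    -- basic exponent facts
  have hs2 : (0:ℝ) < 2 * s := by linarith
  have hN0 : (0:ℝ) < N := by linarith
  have hq0 : 1 < q := by
    have h1 : (1:ℝ) < ((N:ℝ) + α) / N := by rw [lt_div_iff₀ hN0]; linarith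
    linarith
  have hqp : q < p := hq2.trans hp1
  have hp0 : 1 < p := hq0.trans hqp
  have hqpos : 0 < q := by linarith
  have hppos : 0 < p := by linarith
  have hqγ : q * gam N s α q = ((N:ℝ) * q - N - α) / (2 * s) := by
    unfold gam; field_simp
  have hpγ : p * gam N s α p = ((N:ℝ) * p - N - α) / (2 * s) := by
    unfold gam; field_simp
  have hNq : (N:ℝ) + α < N * q := by
    have := (div_lt_iff₀ hN0).mp hq1; linarith
  have hqγ0 : 0 < q * gam N s α q := by
    rw [hqγ]; apply div_pos; linarith; linarith
  have hqγ1 : q * gam N s α q < 1 := by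
    rw [hqγ, div_lt_one hs2]
    have := (lt_div_iff₀ hN0).mp hq2; linarith
  have hpγ1 : 1 < p * gam N s α p := by
    rw [hpγ, lt_div_iff₀ hs2]
    have := (div_lt_iff₀ hN0).mp hp1; linarith
  have hq1γ : 0 < q * (1 - gam N s α q) := by
    have h : q * (1 - gam N s α q) = q - q * gam N s α q := by ring
    rw [h]; linarith
  have hp1γ : 0 ≤ p * (1 - gam N s α p) := by
    have h : p * (1 - gam N s α p) = p - p * gam N s α p := by ring
    rw [h]
    have h2 : p * ((N:ℝ) - 2 * s) ≤ N + α := by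
      have := (le_div_iff₀ (by linarith : (0:ℝ) < (N:ℝ) - 2 * s)).mp hp2; linarith
    rw [hpγ]
    have h3 : ((N:ℝ) * p - N - α) / (2 * s) ≤ p := by
      rw [div_le_iff₀ hs2]; nlinarith only [h2, hs2]
    linarith only [h3]
  set e1 : ℝ := 2 * q * gam N s α q - 2 with he1def
  set e2 : ℝ := 2 * p * gam N s α p - 2 with he2def
  have he1 : e1 < 0 := by rw [he1def]; linarith only [hqγ1]
  have he2 : 0 < e2 := by rw [he2def]; linarith only [hpγ1]
  have h2qγ : 0 < 2 * q * gam N s α q := by linarith only [hqγ0]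
  have h2pγ : 0 < 2 * p * gam N s α p := by linarith only [hpγ1]
  set A : ℝ := Cq / q * a ^ (q * (1 - gam N s α q)) with hAdef
  set B : ℝ := Cp / p * a ^ (p * (1 - gam N s α p)) with hBdef
  have hApos : 0 < A := by
    rw [hAdef]; exact mul_pos (div_pos hCq hqpos) (Real.rpow_pos_of_pos ha _)
  have hBpos : 0 < B := by
    rw [hBdef]; exact mul_pos (div_pos hCp hppos) (Real.rpow_pos_of_pos ha _)
  have hwr : ∀ r : ℝ, w r = 1 - A * r ^ e1 - B * r ^ e2 := hw
  -- GN bounds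
  have hQb : ∀ b ∈ Ioc (0:ℝ) a, ∀ u ∈ msphere N s b,
      nlterm N α q u / (2 * q) ≤ A * gagNorm N s u ^ (2 * q * gam N s α q) / 2 := by
    intro b hb u hu
    have hr0 : (0:ℝ) ≤ gagNorm N s u := Real.sqrt_nonneg _
    have h1 := hGNq u hu.1
    have hsq : Real.sqrt (l2sq N u) ^ (2 * q * (1 - gam N s α q)) = b ^ (q * (1 - gam N s α q)) := by
      rw [hu.2, Real.sqrt_eq_rpow, ← Real.rpow_mul hb.1.le]
      congr 1; ring
    rw [hsq] at h1
    have hba : b ^ (q * (1 - gam N s α q)) ≤ a ^ (q * (1 - gam N s α q)) :=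
      Real.rpow_le_rpow hb.1.le hb.2 hq1γ.le
    have h2 : nlterm N α q u ≤ Cq * gagNorm N s u ^ (2 * q * gam N s α q) * a ^ (q * (1 - gam N s α q)) := by
      refine h1.trans ?_
      have hx : (0:ℝ) ≤ Cq * gagNorm N s u ^ (2 * q * gam N s α q) :=
        mul_nonneg hCq.le (Real.rpow_nonneg hr0 _)
      exact mul_le_mul_of_nonneg_left hba hx
    have heq : Cq * gagNorm N s u ^ (2 * q * gam N s α q) * a ^ (q * (1 - gam N s α q)) / (2 * q)
        = A * gagNorm N s u ^ (2 * q * gam N s α q) / 2 := by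
      rw [hAdef]; field_simp
    rw [← heq]
    exact (div_le_div_iff_of_pos_right (by linarith)).mpr h2
  have hPb : ∀ b ∈ Ioc (0:ℝ) a, ∀ u ∈ msphere N s b,
      nlterm N α p u / (2 * p) ≤ B * gagNorm N s u ^ (2 * p * gam N s α p) / 2 := by
    intro b hb u hu
    have hr0 : (0:ℝ) ≤ gagNorm N s u := Real.sqrt_nonneg _
    have h1 := hGNp u hu.1
    have hsq : Real.sqrt (l2sq N u) ^ (2 * p * (1 - gam N s α p)) = b ^ (p * (1 - gam N s α p)) := by
      rw [hu.2, Real.sqrt_eq_rpow, ← Real.rpow_mul hb.1.le]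
      congr 1; ring
    rw [hsq] at h1
    have hba : b ^ (p * (1 - gam N s α p)) ≤ a ^ (p * (1 - gam N s α p)) :=
      Real.rpow_le_rpow hb.1.le hb.2 hp1γ
    have h2 : nlterm N α p u ≤ Cp * gagNorm N s u ^ (2 * p * gam N s α p) * a ^ (p * (1 - gam N s α p)) := by
      refine h1.trans ?_
      have hx : (0:ℝ) ≤ Cp * gagNorm N s u ^ (2 * p * gam N s α p) :=
        mul_nonneg hCp.le (Real.rpow_nonneg hr0 _)
      exact mul_le_mul_of_nonneg_left hba hx
    have heq : Cp * gagNorm N s u ^ (2 * p * gam N s α p) * a ^ (p * (1 - gam N s α p)) / (2 * p)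
        = B * gagNorm N s u ^ (2 * p * gam N s α p) / 2 := by
      rw [hBdef]; field_simp
    rw [← heq]
    exact (div_le_div_iff_of_pos_right (by linarith)).mpr h2
  -- key lower bound
  have hIw : ∀ b ∈ Ioc (0:ℝ) a, ∀ u ∈ msphere N s b,
      μ / 2 * b + gagNorm N s u ^ 2 / 2 * w (gagNorm N s u) ≤ Ifun N s α q p μ u := by
    intro b hb u hu
    have hr0 : (0:ℝ) ≤ gagNorm N s u := Real.sqrt_nonneg _
    have hgag : gagSqR N s u = gagNorm N s u ^ 2 := (Real.sq_sqrt ENNReal.toReal_nonneg).symm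
    have hQ := hQb b hb u hu
    have hP := hPb b hb u hu
    have hQ0 : (0:ℝ) ≤ nlterm N α q u := ENNReal.toReal_nonneg
    have hP0 : (0:ℝ) ≤ nlterm N α p u := ENNReal.toReal_nonneg
    rcases eq_or_lt_of_le hr0 with h0 | hpos
    · have hrz : gagNorm N s u = 0 := h0.symm
      have hz1 : gagNorm N s u ^ (2 * q * gam N s α q) = 0 := by
        rw [hrz]; exact Real.zero_rpow (ne_of_gt h2qγ)
      have hz2 : gagNorm N s u ^ (2 * p * gam N s α p) = 0 := by
        rw [hrz]; exact Real.zero_rpow (ne_of_gt h2pγ)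
      rw [hz1] at hQ; rw [hz2] at hP
      unfold Ifun
      rw [hu.2, hgag, hrz]
      have hq2q : (0:ℝ) < 2 * q := by linarith
      have hp2p : (0:ℝ) < 2 * p := by linarith
      have l1 : nlterm N α q u / (2 * q) ≤ 0 := by simpa using hQ
      have l2 : nlterm N α p u / (2 * p) ≤ 0 := by simpa using hP
      simp only [ne_eq, OfNat.ofNat_ne_zero, not_false_eq_true, zero_pow, zero_div]
      linarith only [l1, l2]
    · have hrq : gagNorm N s u ^ (2 * q * gam N s α q)
          = gagNorm N s u ^ 2 * gagNorm N s u ^ e1 := by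
        rw [show gagNorm N s u ^ (2:ℕ) = gagNorm N s u ^ ((2:ℕ):ℝ) from
          (Real.rpow_natCast _ 2).symm, ← Real.rpow_add hpos]
        congr 1
        rw [he1def]; push_cast; ring
      have hrp : gagNorm N s u ^ (2 * p * gam N s α p)
          = gagNorm N s u ^ 2 * gagNorm N s u ^ e2 := by
        rw [show gagNorm N s u ^ (2:ℕ) = gagNorm N s u ^ ((2:ℕ):ℝ) from
          (Real.rpow_natCast _ 2).symm, ← Real.rpow_add hpos]
        congr 1
        rw [he2def]; push_cast; ring
      rw [hrq] at hQ; rw [hrp] at hP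
      unfold Ifun
      rw [hu.2, hgag, hwr]
      nlinarith only [hQ, hP]
  -- nonnegativity of truncated functional off the R0-ball
  have hwnn : ∀ r ∈ Icc R0 R1, 0 ≤ w r := by
    intro r hr
    have h0 : A * R0 ^ e1 + B * R0 ^ e2 = 1 := by
      have := hwr R0; rw [hwR0] at this; linarith only [this]
    have h1 : A * R1 ^ e1 + B * R1 ^ e2 = 1 := by
      have := hwr R1; rw [hwR1] at this; linarith only [this]
    have := w_nonneg_aux hApos hBpos hR0 hR01 h0 h1 hr
    rw [hwr]; linarith only [this]
  have hITnn : ∀ b ∈ Ioc (0:ℝ) a, ∀ u ∈ msphere N s b, R0 ≤ gagNorm N s u →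
      0 ≤ ITfun N s α q p μ τ u := by
    intro b hb u hu hR
    have hr0 : (0:ℝ) ≤ gagNorm N s u := Real.sqrt_nonneg _
    have hgag : gagSqR N s u = gagNorm N s u ^ 2 := (Real.sq_sqrt ENNReal.toReal_nonneg).symm
    have hP0 : (0:ℝ) ≤ nlterm N α p u := ENNReal.toReal_nonneg
    have hQ0 : (0:ℝ) ≤ nlterm N α q u := ENNReal.toReal_nonneg
    have hμb : 0 ≤ μ / 2 * b := mul_nonneg (by linarith) hb.1.le
    rcases le_or_gt (gagNorm N s u) R1 with hle | hgt
    · -- R0 ≤ r ≤ R1 : compare with Ifun and use w ≥ 0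
      have hτle : τ (gagNorm N s u) ≤ 1 := (hτ01 _ hr0).2
      have hτge : 0 ≤ τ (gagNorm N s u) := (hτ01 _ hr0).1
      have hIT : Ifun N s α q p μ u ≤ ITfun N s α q p μ τ u := by
        unfold Ifun ITfun
        have h2p : (0:ℝ) < 2 * p := by linarith
        have key : τ (gagNorm N s u) * nlterm N α p u / (2 * p) ≤ nlterm N α p u / (2 * p) :=
          (div_le_div_iff_of_pos_right h2p).mpr (mul_le_of_le_one_left hP0 hτle)
        linarith only [key]
      have hwpos := hwnn (gagNorm N s u) ⟨hR, hle⟩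
      have := hIw b hb u hu
      nlinarith only [this, hIT, hwpos, hμb, sq_nonneg (gagNorm N s u)]
    · -- r > R1 : τ = 0
      have hτ0 : τ (gagNorm N s u) = 0 := hτzero _ hgt.le
      have hrpos : 0 < gagNorm N s u := lt_of_lt_of_le hR0 hR
      have hR1pos : 0 < R1 := hR0.trans hR01
      have hQ := hQb b hb u hu
      have hrq : gagNorm N s u ^ (2 * q * gam N s α q)
          = gagNorm N s u ^ 2 * gagNorm N s u ^ e1 := by
        rw [show gagNorm N s u ^ (2:ℕ) = gagNorm N s u ^ ((2:ℕ):ℝ) from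
          (Real.rpow_natCast _ 2).symm, ← Real.rpow_add hrpos]
        congr 1
        rw [he1def]; push_cast; ring
      rw [hrq] at hQ
      have hre1 : gagNorm N s u ^ e1 ≤ R1 ^ e1 :=
        Real.rpow_le_rpow_of_nonpos hR1pos hgt.le he1.le
      have h1 : A * R1 ^ e1 + B * R1 ^ e2 = 1 := by
        have := hwr R1; rw [hwR1] at this; linarith only [this]
      have hBe2 : 0 < B * R1 ^ e2 := mul_pos hBpos (Real.rpow_pos_of_pos hR1pos _)
      have hAr : A * gagNorm N s u ^ e1 ≤ 1 - B * R1 ^ e2 := by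
        nlinarith only [mul_le_mul_of_nonneg_left hre1 hApos.le, h1]
      unfold ITfun
      rw [hτ0, hu.2, hgag]
      have hsq : (0:ℝ) ≤ gagNorm N s u ^ 2 := sq_nonneg _
      have h3 : A * (gagNorm N s u ^ 2 * gagNorm N s u ^ e1) / 2 ≤ gagNorm N s u ^ 2 / 2 := by
        nlinarith only [mul_le_mul_of_nonneg_left hAr hsq, mul_nonneg hsq hBe2.le]
      have hfin : nlterm N α q u / (2 * q) ≤ gagNorm N s u ^ 2 / 2 := le_trans hQ h3
      have hz : (0:ℝ) * nlterm N α p u / (2 * p) = 0 := by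
        rw [zero_mul, zero_div]
      rw [hz]
      linarith only [hfin, hμb]
  -- existence of negative-energy feasible functions
  have hex : ∀ b ∈ Ioc (0:ℝ) a, ∃ u, (u ∈ msphere N s b ∧ gagNorm N s u < R0)
      ∧ Ifun N s α q p μ u < 0 := by
    intro b hb
    by_contra hcon
    push_neg at hcon
    have h0 : ∀ x ∈ ITfun N s α q p μ τ '' msphere N s b, (0:ℝ) ≤ x := by
      rintro x ⟨u, hu, rfl⟩
      rcases lt_or_ge (gagNorm N s u) R0 with hlt | hge
      · have hτ1 : τ (gagNorm N s u) = 1 := hτone _ ⟨Real.sqrt_nonneg _, hlt.le⟩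
        have hIT : ITfun N s α q p μ τ u = Ifun N s α q p μ u := by
          unfold ITfun Ifun; rw [hτ1]; ring
        rw [hIT]
        exact hcon u ⟨hu, hlt⟩
      · exact hITnn b hb u hu hge
    have hsnn : (0:ℝ) ≤ sInf (ITfun N s α q p μ τ '' msphere N s b) := by
      rcases (ITfun N s α q p μ τ '' msphere N s b).eq_empty_or_nonempty with he | hne
      · rw [he, Real.sInf_empty]
      · exact le_csInf hne h0
    linarith only [hsnn, hneg b hb]
  -- uniform bounds on the feasible region
  set QM : ℝ := A * R0 ^ (2 * q * gam N s α q) / 2 with hQMdef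
  set PM : ℝ := B * R0 ^ (2 * p * gam N s α p) / 2 with hPMdef
  have hQMpos : 0 < QM := by
    rw [hQMdef]; exact div_pos (mul_pos hApos (Real.rpow_pos_of_pos hR0 _)) two_pos
  have hPMpos : 0 < PM := by
    rw [hPMdef]; exact div_pos (mul_pos hBpos (Real.rpow_pos_of_pos hR0 _)) two_pos
  have hQmax : ∀ b ∈ Ioc (0:ℝ) a, ∀ u ∈ msphere N s b, gagNorm N s u ≤ R0 →
      nlterm N α q u / (2 * q) ≤ QM ∧ nlterm N α p u / (2 * p) ≤ PM := by
    intro b hb u hu hle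
    have hr0 : (0:ℝ) ≤ gagNorm N s u := Real.sqrt_nonneg _
    constructor
    · refine (hQb b hb u hu).trans ?_
      rw [hQMdef]
      have := Real.rpow_le_rpow hr0 hle h2qγ.le
      nlinarith only [this, hApos]
    · refine (hPb b hb u hu).trans ?_
      rw [hPMdef]
      have := Real.rpow_le_rpow hr0 hle h2pγ.le
      nlinarith only [this, hBpos]
  -- lower bound on the feasible image
  have hlb : ∀ b ∈ Ioc (0:ℝ) a, ∀ x ∈ Ifun N s α q p μ ''
      {u | u ∈ msphere N s b ∧ gagNorm N s u < R0}, -(QM + PM) ≤ x := by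
    rintro b hb x ⟨u, ⟨hu, hlt⟩, rfl⟩
    obtain ⟨hQm, hPm⟩ := hQmax b hb u hu hlt.le
    have hg0 : (0:ℝ) ≤ gagSqR N s u := ENNReal.toReal_nonneg
    have hμb : (0:ℝ) ≤ μ / 2 * l2sq N u := by
      rw [hu.2]; exact mul_nonneg (by linarith) hb.1.le
    unfold Ifun
    linarith only [hQm, hPm, hg0, hμb]
  have hbdd : ∀ b ∈ Ioc (0:ℝ) a, BddBelow (Ifun N s α q p μ ''
      {u | u ∈ msphere N s b ∧ gagNorm N s u < R0}) :=
    fun b hb => ⟨-(QM + PM), fun x hx => hlb b hb x hx⟩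
  have hnem : ∀ b ∈ Ioc (0:ℝ) a, (Ifun N s α q p μ ''
      {u | u ∈ msphere N s b ∧ gagNorm N s u < R0}).Nonempty := by
    intro b hb
    obtain ⟨u, hu, -⟩ := hex b hb
    exact ⟨_, ⟨u, hu, rfl⟩⟩
  have hmneg : ∀ b ∈ Ioc (0:ℝ) a, m b < 0 := by
    intro b hb
    obtain ⟨u, hu, hI⟩ := hex b hb
    rw [hm b]
    exact lt_of_le_of_lt (csInf_le (hbdd b hb) ⟨u, hu, rfl⟩) hI
  -- scaling identities
  have hIscale : ∀ θ : ℝ, 0 < θ → ∀ u : EN N → ℝ,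
      Ifun N s α q p μ (Real.sqrt θ • u) = θ * (gagSqR N s u / 2) + θ * (μ / 2 * l2sq N u)
        - θ ^ q * (nlterm N α q u / (2 * q)) - θ ^ p * (nlterm N α p u / (2 * p)) := by
    intro θ hθ u
    have hsθ : 0 < Real.sqrt θ := Real.sqrt_pos.2 hθ
    have h2q : Real.sqrt θ ^ (2 * q) = θ ^ q := by
      rw [Real.sqrt_eq_rpow, ← Real.rpow_mul hθ.le]
      congr 1; ring
    have h2p : Real.sqrt θ ^ (2 * p) = θ ^ p := by
      rw [Real.sqrt_eq_rpow, ← Real.rpow_mul hθ.le]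
      congr 1; ring
    unfold Ifun
    rw [gagSqR_smul, l2sq_smul, nlterm_smul _ _ _ hsθ, nlterm_smul _ _ _ hsθ,
      Real.sq_sqrt hθ.le, h2q, h2p]
    ring
  have hfeas_scale : ∀ θ : ℝ, 0 < θ → ∀ b : ℝ, ∀ u ∈ msphere N s b,
      Real.sqrt θ • u ∈ msphere N s (θ * b) := by
    intro θ hθ b u hu
    refine ⟨memH_smul N s _ hu.1, ?_⟩
    rw [l2sq_smul, Real.sq_sqrt hθ.le, hu.2]
  -- uniform difference bound under scaling
  have hdiff : ∀ θ : ℝ, 0 < θ → ∀ b ∈ Ioc (0:ℝ) a, ∀ u ∈ msphere N s b, gagNorm N s u ≤ R0 →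
      |Ifun N s α q p μ (Real.sqrt θ • u) - Ifun N s α q p μ u| ≤
        |θ - 1| * (R0 ^ 2 / 2 + μ / 2 * a) + |θ ^ q - 1| * QM + |θ ^ p - 1| * PM := by
    intro θ hθ b hb u hu hle
    obtain ⟨hQm, hPm⟩ := hQmax b hb u hu hle
    have hQ0 : (0:ℝ) ≤ nlterm N α q u / (2 * q) := by
      apply div_nonneg ENNReal.toReal_nonneg; linarith
    have hP0 : (0:ℝ) ≤ nlterm N α p u / (2 * p) := by
      apply div_nonneg ENNReal.toReal_nonneg; linarith
    have hg0 : (0:ℝ) ≤ gagSqR N s u := ENNReal.toReal_nonneg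
    have hgle : gagSqR N s u ≤ R0 ^ 2 := by
      have : gagSqR N s u = gagNorm N s u ^ 2 := (Real.sq_sqrt ENNReal.toReal_nonneg).symm
      rw [this]
      exact pow_le_pow_left₀ (Real.sqrt_nonneg _) hle 2
    have hl2 : (0:ℝ) ≤ μ / 2 * l2sq N u ∧ μ / 2 * l2sq N u ≤ μ / 2 * a := by
      constructor
      · rw [hu.2]; exact mul_nonneg (by linarith) hb.1.le
      · rw [hu.2]; exact mul_le_mul_of_nonneg_left hb.2 (by linarith)
    have h1 : Ifun N s α q p μ (Real.sqrt θ • u) - Ifun N s α q p μ u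
        = (θ - 1) * (gagSqR N s u / 2 + μ / 2 * l2sq N u)
          - (θ ^ q - 1) * (nlterm N α q u / (2 * q))
          - (θ ^ p - 1) * (nlterm N α p u / (2 * p)) := by
      rw [hIscale θ hθ u]
      unfold Ifun
      ring
    rw [h1]
    have t1 : |(θ - 1) * (gagSqR N s u / 2 + μ / 2 * l2sq N u)|
        ≤ |θ - 1| * (R0 ^ 2 / 2 + μ / 2 * a) := by
      rw [abs_mul]
      apply mul_le_mul_of_nonneg_left _ (abs_nonneg _)
      rw [abs_of_nonneg (by linarith [hl2.1, hg0])]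
      linarith [hl2.2, hgle]
    have t2 : |(θ ^ q - 1) * (nlterm N α q u / (2 * q))| ≤ |θ ^ q - 1| * QM := by
      rw [abs_mul]
      apply mul_le_mul_of_nonneg_left _ (abs_nonneg _)
      rw [abs_of_nonneg hQ0]; exact hQm
    have t3 : |(θ ^ p - 1) * (nlterm N α p u / (2 * p))| ≤ |θ ^ p - 1| * PM := by
      rw [abs_mul]
      apply mul_le_mul_of_nonneg_left _ (abs_nonneg _)
      rw [abs_of_nonneg hP0]; exact hPm
    calc |(θ - 1) * (gagSqR N s u / 2 + μ / 2 * l2sq N u)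
          - (θ ^ q - 1) * (nlterm N α q u / (2 * q))
          - (θ ^ p - 1) * (nlterm N α p u / (2 * p))|
        ≤ |(θ - 1) * (gagSqR N s u / 2 + μ / 2 * l2sq N u)
          - (θ ^ q - 1) * (nlterm N α q u / (2 * q))|
          + |(θ ^ p - 1) * (nlterm N α p u / (2 * p))| := abs_sub _ _
      _ ≤ |(θ - 1) * (gagSqR N s u / 2 + μ / 2 * l2sq N u)|
          + |(θ ^ q - 1) * (nlterm N α q u / (2 * q))|
          + |(θ ^ p - 1) * (nlterm N α p u / (2 * p))| := by
            have := abs_sub ((θ - 1) * (gagSqR N s u / 2 + μ / 2 * l2sq N u))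
              ((θ ^ q - 1) * (nlterm N α q u / (2 * q)))
            linarith only [this]
      _ ≤ |θ - 1| * (R0 ^ 2 / 2 + μ / 2 * a) + |θ ^ q - 1| * QM + |θ ^ p - 1| * PM := by
            linarith only [t1, t2, t3]
  -- main continuity argument
  rw [Metric.continuousOn_iff]
  intro b hb ε hε
  have hmb := hmneg b hb
  -- choice of ρ < R0 trapping near-minimizers
  have hwcont : ContinuousAt (fun r : ℝ => r ^ 2 / 2 * w r) R0 := by
    have hwe : (fun r : ℝ => r ^ 2 / 2 * w r)
        = fun r => r ^ 2 / 2 * (1 - A * r ^ e1 - B * r ^ e2) := by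
      funext r; rw [hwr r]
    rw [hwe]
    have c1 : ContinuousAt (fun r : ℝ => r ^ e1) R0 :=
      Real.continuousAt_rpow_const R0 e1 (Or.inl (ne_of_gt hR0))
    have c2 : ContinuousAt (fun r : ℝ => r ^ e2) R0 :=
      Real.continuousAt_rpow_const R0 e2 (Or.inl (ne_of_gt hR0))
    exact (((continuous_pow 2).continuousAt).div_const 2).mul
      (((continuousAt_const.sub (continuousAt_const.mul c1))).sub (continuousAt_const.mul c2))
  have hφlt : m b / 4 < R0 ^ 2 / 2 * w R0 := by rw [hwR0]; nlinarith only [hmb]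
  have hevφ : ∀ᶠ r in 𝓝 R0, m b / 4 < r ^ 2 / 2 * w r :=
    Filter.Tendsto.eventually_const_lt hφlt hwcont
  obtain ⟨δw, hδw, hballw⟩ := Metric.eventually_nhds_iff.mp hevφ
  set ρ : ℝ := R0 - min (δw / 2) (R0 / 2) with hρdef
  have hmin1 : min (δw / 2) (R0 / 2) ≤ δw / 2 := min_le_left _ _
  have hmin2 : min (δw / 2) (R0 / 2) ≤ R0 / 2 := min_le_right _ _
  have hminpos : 0 < min (δw / 2) (R0 / 2) := lt_min (by linarith) (by linarith)
  have hρ0 : 0 < ρ := by rw [hρdef]; linarith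
  have hρR0 : ρ < R0 := by rw [hρdef]; linarith
  have hρprop : ∀ r : ℝ, ρ ≤ r → r ≤ R0 → m b / 4 < r ^ 2 / 2 * w r := by
    intro r h1 h2
    refine hballw ?_
    rw [Real.dist_eq, abs_of_nonpos (by linarith)]
    rw [hρdef] at h1
    linarith
  have htrap : ∀ b' ∈ Ioc (0:ℝ) a, ∀ u, u ∈ msphere N s b' → gagNorm N s u < R0 →
      Ifun N s α q p μ u ≤ m b / 4 → gagNorm N s u < ρ := by
    intro b' hb' u hu hltR0 hIle
    by_contra hge
    push_neg at hge
    have hφ := hρprop _ hge hltR0.le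
    have hI := hIw b' hb' u hu
    have hμb' : 0 ≤ μ / 2 * b' := mul_nonneg (by linarith) hb'.1.le
    linarith only [hφ, hI, hμb', hIle]
  -- epsilon bookkeeping
  set ε1 : ℝ := min (ε / 2) (-(m b) / 8) with hε1def
  have hε1pos : 0 < ε1 := lt_min (by linarith) (by linarith)
  have hε1a : ε1 ≤ ε / 2 := min_le_left _ _
  have hε1b : ε1 ≤ -(m b) / 8 := min_le_right _ _
  -- neighborhood of 1 for the scaling parameter
  set g : ℝ → ℝ := fun θ : ℝ => |θ - 1| * (R0 ^ 2 / 2 + μ / 2 * a)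
      + |θ ^ q - 1| * QM + |θ ^ p - 1| * PM with hgdef
  have hgc : ContinuousAt g 1 := by
    have cq : ContinuousAt (fun θ : ℝ => θ ^ q) 1 :=
      Real.continuousAt_rpow_const 1 q (Or.inl one_ne_zero)
    have cp : ContinuousAt (fun θ : ℝ => θ ^ p) 1 :=
      Real.continuousAt_rpow_const 1 p (Or.inl one_ne_zero)
    exact ((((continuousAt_id.sub continuousAt_const).abs).mul continuousAt_const).add
      (((cq.sub continuousAt_const).abs).mul continuousAt_const)).add
      (((cp.sub continuousAt_const).abs).mul continuousAt_const)
  have hg1 : g 1 < ε1 := by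
    rw [hgdef]
    simp [Real.one_rpow]
    exact hε1pos
  have h13 : 1 < (R0 / ρ) ^ 2 := one_lt_pow₀ ((one_lt_div hρ0).2 hρR0) two_ne_zero
  have hev2 : ∀ᶠ θ in 𝓝 (1:ℝ), (g θ < ε1 ∧ (1/2 : ℝ) < θ) ∧ θ < (R0 / ρ) ^ 2 := by
    refine Filter.Eventually.and (Filter.Eventually.and ?_ ?_) ?_
    · exact Filter.Tendsto.eventually_lt_const hg1 hgc
    · exact Filter.Tendsto.eventually_const_lt (by norm_num) tendsto_id
    · exact Filter.Tendsto.eventually_lt_const h13 tendsto_id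
  obtain ⟨δθ, hδθ, hθprop⟩ := Metric.eventually_nhds_iff.mp hev2
  -- the generic one-sided step
  have stepA : ∀ c ∈ Ioc (0:ℝ) a, ∀ c' ∈ Ioc (0:ℝ) a, ∀ u, u ∈ msphere N s c →
      gagNorm N s u < ρ → dist (c' / c) 1 < δθ →
      m c' ≤ Ifun N s α q p μ u + ε1 := by
    intro c hc c' hc' u hu hρu hθd
    have hθpos : 0 < c' / c := div_pos hc'.1 hc.1
    obtain ⟨⟨hgθ, -⟩, hθub⟩ := hθprop hθd
    have hsθpos : 0 < Real.sqrt (c' / c) := Real.sqrt_pos.2 hθpos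
    have hv : Real.sqrt (c' / c) • u ∈ msphere N s c' := by
      have h1 := hfeas_scale (c' / c) hθpos c u hu
      rwa [div_mul_cancel₀ _ (ne_of_gt hc.1)] at h1
    have hsl : Real.sqrt (c' / c) < R0 / ρ := by
      have h1 : Real.sqrt (c' / c) < Real.sqrt ((R0 / ρ) ^ 2) :=
        Real.sqrt_lt_sqrt hθpos.le hθub
      rwa [Real.sqrt_sq (div_nonneg hR0.le hρ0.le)] at h1
    have hvnorm : gagNorm N s (Real.sqrt (c' / c) • u) < R0 := by
      rw [gagNorm_smul N s (Real.sqrt_nonneg _)]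
      have h1 : Real.sqrt (c' / c) * gagNorm N s u < Real.sqrt (c' / c) * ρ :=
        mul_lt_mul_of_pos_left hρu hsθpos
      have h2 : Real.sqrt (c' / c) * ρ < (R0 / ρ) * ρ := mul_lt_mul_of_pos_right hsl hρ0
      have h3 : (R0 / ρ) * ρ = R0 := div_mul_cancel₀ _ (ne_of_gt hρ0)
      linarith only [h1, h2, h3.le, h3.ge]
    have hmle : m c' ≤ Ifun N s α q p μ (Real.sqrt (c' / c) • u) := by
      rw [hm c']
      exact csInf_le (hbdd c' hc') ⟨_, ⟨hv, hvnorm⟩, rfl⟩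
    have hd := hdiff (c' / c) hθpos c hc u hu (le_of_lt (hρu.trans hρR0))
    have habs := (abs_le.mp hd).2
    simp only [hgdef] at hgθ
    linarith only [hmle, habs, hgθ]
  -- choice of δ
  refine ⟨min (b / 2) (b * δθ / 2), lt_min (by linarith [hb.1]) (by linarith [mul_pos hb.1 hδθ]), ?_⟩
  intro b' hb' hdist
  have hbpos := hb.1
  have hb'pos := hb'.1
  rw [Real.dist_eq] at hdist
  have hd1 : |b' - b| < b / 2 := lt_of_lt_of_le hdist (min_le_left _ _)
  have hd2 : |b' - b| < b * δθ / 2 := lt_of_lt_of_le hdist (min_le_right _ _)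
  have hb'half : b / 2 < b' := by
    have := abs_lt.mp hd1
    linarith [this.1]
  have hdA : dist (b' / b) 1 < δθ := by
    rw [Real.dist_eq]
    have he : b' / b - 1 = (b' - b) / b := by field_simp
    rw [he, abs_div, abs_of_pos hbpos, div_lt_iff₀ hbpos]
    nlinarith only [hd2, hδθ, hbpos]
  have hdB : dist (b / b') 1 < δθ := by
    rw [Real.dist_eq]
    have he : b / b' - 1 = (b - b') / b' := by field_simp
    rw [he, abs_div, abs_of_pos hb'pos, div_lt_iff₀ hb'pos]
    have habs : |b - b'| = |b' - b| := abs_sub_comm _ _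
    rw [habs]
    nlinarith only [hd2, hδθ, hb'half, hbpos]
  -- forward bound : m b' < m b + 2 ε1
  have hforward : m b' < m b + 2 * ε1 := by
    have h' : sInf (Ifun N s α q p μ '' {u | u ∈ msphere N s b ∧ gagNorm N s u < R0})
        < m b + ε1 := by
      rw [← hm b]; linarith
    obtain ⟨x, ⟨u, hu, rfl⟩, hx⟩ := (csInf_lt_iff (hbdd b hb) (hnem b hb)).mp h'
    have hIle : Ifun N s α q p μ u ≤ m b / 4 := by linarith only [hx, hε1b, hmb]
    have hutrap : gagNorm N s u < ρ := htrap b hb u hu.1 hu.2 hIle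
    have hA := stepA b hb b' hb' u hu.1 hutrap hdA
    linarith only [hA, hx]
  -- backward bound : m b < m b' + 2 ε1
  have hbackward : m b < m b' + 2 * ε1 := by
    have h' : sInf (Ifun N s α q p μ '' {u | u ∈ msphere N s b' ∧ gagNorm N s u < R0})
        < m b' + ε1 := by
      rw [← hm b']; linarith [hmneg b' hb']
    obtain ⟨x, ⟨u, hu, rfl⟩, hx⟩ := (csInf_lt_iff (hbdd b' hb') (hnem b' hb')).mp h'
    have hIle : Ifun N s α q p μ u ≤ m b / 4 := by
      linarith only [hx, hforward, hε1b, hmb]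
    have hutrap : gagNorm N s u < ρ := htrap b' hb' u hu.1 hu.2 hIle
    have hB := stepA b' hb' b hb u hu.1 hutrap hdB
    linarith only [hB, hx]
  rw [Real.dist_eq, abs_sub_lt_iff]
  constructor <;> linarith only [hforward, hbackward, hε1a, hε1pos, hε]
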